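/- arXiv:2107.03027 — 4 statements merged into one kernel-verified Lean document; each statement's English description precedes it below -/
import Mathlib

section
/- Let p be a prime, let Y be a finitely generated free ℤ_p-module equipped with a ℤ_p-linear automorphism σ satisfying σ^p = id, and suppose that the quotient Y/(σ−1)Y is isomorphic as an abelian group to (ℤ/pℤ)^r for some integer r ≥ 0. Then the norm element N = 1 + σ + σ² + ⋯ + σ^{p−1} annihilates Y, i.e., N(y) = 0 for every y ∈ Y. -/
/-- Let `p` be a prime, `Y` a finitely generated free `ℤ_p`-module with a `ℤ_p`-linear
automorphism `σ` satisfying `σ^p = 1`, and suppose `Y/(σ-1)Y ≅ (ℤ/pℤ)^r` as abelian groups.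
Then the norm element `N = 1 + σ + ⋯ + σ^(p-1)` annihilates `Y`. -/
theorem stmt0 (p : ℕ) [Fact p.Prime] (Y : Type*) [AddCommGroup Y] [Module ℤ_[p] Y]
    [Module.Free ℤ_[p] Y] [Module.Finite ℤ_[p] Y]
    (σ : Module.End ℤ_[p] Y) (hbij : Function.Bijective σ) (hord : σ ^ p = 1)
    (r : ℕ)
    (hquot : Nonempty ((Y ⧸ LinearMap.range (σ - 1)) ≃+ (Fin r → ZMod p))) :
    ∀ y : Y, (∑ i ∈ Finset.range p, σ ^ i) y = 0 := by
  intro y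
  set N : Module.End ℤ_[p] Y := ∑ i ∈ Finset.range p, σ ^ i with hN
  have hNmul : N * (σ - 1) = 0 := by
    rw [hN, geom_sum_mul, hord, sub_self]
  have hmulN : (σ - 1) * N = 0 := by
    rw [hN, mul_geom_sum, hord, sub_self]
  set R := LinearMap.range (σ - 1) with hR
  -- p kills the quotient
  have hp : ∀ q : Y ⧸ R, p • q = 0 := by
    obtain ⟨e⟩ := hquot
    intro q
    apply e.injective
    rw [map_nsmul, map_zero]
    funext i
    simp [nsmul_eq_mul, ZMod.natCast_self]
  -- the quotient map kills σ z - z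
  have h1 : ∀ z : Y, R.mkQ (σ z) = R.mkQ z := by
    intro z
    rw [← sub_eq_zero, ← map_sub, Submodule.mkQ_apply, Submodule.Quotient.mk_eq_zero]
    exact ⟨z, rfl⟩
  have h2 : ∀ (i : ℕ) (z : Y), R.mkQ ((σ ^ i) z) = R.mkQ z := by
    intro i z
    induction i with
    | zero => simp
    | succ n ih =>
      rw [pow_succ', Module.End.mul_apply, h1, ih]
  have hmem : N y ∈ R := by
    rw [← Submodule.Quotient.mk_eq_zero, ← Submodule.mkQ_apply]
    have : N y = ∑ i ∈ Finset.range p, (σ ^ i) y := by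
      rw [hN, LinearMap.sum_apply]
    rw [this, map_sum]
    have : ∑ i ∈ Finset.range p, R.mkQ ((σ ^ i) y) = p • R.mkQ y := by
      rw [Finset.sum_congr rfl (fun i _ => h2 i y), Finset.sum_const,
        Finset.card_range]
    rw [this, hp]
  obtain ⟨x, hx⟩ := hmem
  have hNN0 : N (N y) = 0 := by
    rw [← hx, ← Module.End.mul_apply, hNmul, LinearMap.zero_apply]
  have hfix : σ (N y) = N y := by
    have := congrArg (fun f : Module.End ℤ_[p] Y => f y) hmulN
    simp only [Module.End.mul_apply, LinearMap.zero_apply, LinearMap.sub_apply,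
      Module.End.one_apply] at this
    exact sub_eq_zero.mp this
  have hfixpow : ∀ i : ℕ, (σ ^ i) (N y) = N y := by
    intro i
    induction i with
    | zero => simp
    | succ n ih => rw [pow_succ, Module.End.mul_apply, hfix, ih]
  have hNNp : N (N y) = p • N y := by
    rw [hN, LinearMap.sum_apply, Finset.sum_congr rfl (fun i _ => hfixpow i),
      Finset.sum_const, Finset.card_range]
  have hp0 : (p : ℤ_[p]) • N y = 0 := by
    rw [← hNNp.symm.trans hNN0] at *
    rw [Nat.cast_smul_eq_nsmul, ← hNNp, hNN0]
  have hpne : (p : ℤ_[p]) ≠ 0 := by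
    exact_mod_cast (Fact.out : p.Prime).ne_zero
  rcases smul_eq_zero.mp hp0 with h | h
  · exact absurd h hpne
  · exact h
end

section
/- Let p be a prime, let Y be a finitely generated free ℤ_p-module equipped with a ℤ_p-linear automorphism σ satisfying σ^p = id, and suppose that the quotient Y/(σ−1)Y is isomorphic as an abelian group to (ℤ/pℤ)^r for some integer r ≥ 0. Then Y can be generated as a ℤ_p-module by (p−1)·r elements; equivalently, Y is a quotient of the free module ℤ_p^{(p−1)r}. -/
/-!
Put `T = σ - 1`. Since `σ^p = 1` and the cokernel of `T` is killed by `p`, the norm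
`∑ σ^i` kills `p • ker T ⊆ T Y` while acting on `ker T` as multiplication by `p`, so `T` is
injective (`Y` is torsion free); then `T ∘ ∑ σ^i = σ^p - 1 = 0` forces `∑ σ^i = 0`.
Expanding `σ = 1 + T`, the norm is `T^(p-1) + p·(…)`, so `T^(p-1)` maps `Y` into `pY`,
and `σ^(p-1)` is a combination of lower powers of `σ`.

Lift generators `y₁, …, y_r` of `Y/TY`. The span `M` of the `σ^j y_i` with `j < p - 1` is
`σ`-stable and `M + TY = Y`, hence `M + T^k Y = Y` for all `k`; with `k = p - 1` this gives
`M + pY = Y`, and Nakayama gives `M = Y`.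
-/

open Finset Polynomial Submodule

theorem geom_sum_one_add_eq_sum_choose {A : Type*} [Ring A] (a : A) (n : ℕ) :
    ∑ i ∈ range n, (1 + a) ^ i = ∑ k ∈ range n, (n.choose (k + 1) : A) * a ^ k := by
  -- proved in `ℤ[X]`, where the factor `X = (1 + X) - 1` can be cancelled
  have key : (X : ℤ[X]) * ∑ i ∈ range n, (1 + X) ^ i
      = X * ∑ k ∈ range n, (n.choose (k + 1) : ℤ[X]) * X ^ k := by
    calc (X : ℤ[X]) * ∑ i ∈ range n, (1 + X) ^ i
        = ((1 + X) - 1) * ∑ i ∈ range n, (1 + X) ^ i := by rw [add_sub_cancel_left]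
      _ = (X + 1) ^ n - 1 := by rw [mul_geom_sum, add_comm]
      _ = X * ∑ k ∈ range n, (n.choose (k + 1) : ℤ[X]) * X ^ k := by
        rw [add_pow, sum_range_succ', mul_sum]
        simp only [one_pow, mul_one, pow_zero, Nat.choose_zero_right, Nat.cast_one,
          add_sub_cancel_right]
        exact sum_congr rfl fun k _ => by ring
  simpa using congrArg (aeval a) (mul_left_cancel₀ X_ne_zero key)

theorem exists_geom_sum_one_add_eq {A : Type*} [Ring A] {p : ℕ} (hp : p.Prime) (a : A) :
    ∃ b : A, ∑ i ∈ range p, (1 + a) ^ i = a ^ (p - 1) + p * b := by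
  refine ⟨∑ k ∈ range (p - 1), ((p.choose (k + 1) / p : ℕ) : A) * a ^ k, ?_⟩
  obtain ⟨q, rfl⟩ : ∃ q, p = q + 1 := ⟨p - 1, (Nat.sub_add_cancel hp.one_le).symm⟩
  rw [geom_sum_one_add_eq_sum_choose, sum_range_succ, Nat.choose_self, Nat.cast_one, one_mul,
    add_comm, Nat.add_sub_cancel, mul_sum]
  refine congrArg _ (sum_congr rfl fun k hk => ?_)
  have hdvd : q + 1 ∣ (q + 1).choose (k + 1) :=
    hp.dvd_choose_self k.succ_ne_zero (by simpa using hk)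
  rw [← mul_assoc, ← Nat.cast_mul, Nat.mul_div_cancel' hdvd]

theorem AddEquiv.span_range_symm_single_eq_top {R M ι : Type*} [Semiring R] [AddCommMonoid M]
    [Module R M] [Fintype ι] [DecidableEq ι] {n : ℕ} [NeZero n] (e : M ≃+ (ι → ZMod n)) :
    span R (Set.range fun i => e.symm (Pi.single i 1)) = ⊤ := by
  refine eq_top_iff.mpr fun x _ => ?_
  have hx : e x = ∑ i, (e x i).val • Pi.single i 1 := by
    conv_lhs => rw [← Finset.univ_sum_single (e x)]
    refine sum_congr rfl fun i _ => ?_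
    rw [← Pi.single_smul, nsmul_eq_mul, mul_one, ZMod.natCast_zmod_val]
  rw [← e.symm_apply_apply x, hx, map_sum]
  exact sum_mem fun i _ => by
    rw [map_nsmul]; exact nsmul_mem (subset_span (Set.mem_range_self i)) _

namespace Submodule

variable {R M ι : Type*} [Ring R] [AddCommGroup M] [Module R M] {N : Submodule R M} {n : ℕ}

theorem nsmul_mem_of_quotient_addEquiv_zmod (e : (M ⧸ N) ≃+ (ι → ZMod n)) (x : M) :
    n • x ∈ N := by
  rw [← Quotient.mk_eq_zero, Quotient.mk_smul]
  exact e.injective (by ext; simp)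

theorem sup_eq_top_of_mkQ_eq_symm_single [Fintype ι] [DecidableEq ι] [NeZero n]
    (e : (M ⧸ N) ≃+ (ι → ZMod n)) {y : ι → M}
    (hy : ∀ i, N.mkQ (y i) = e.symm (Pi.single i 1))
    {P : Submodule R M} (hyP : ∀ i, y i ∈ P) : P ⊔ N = ⊤ := by
  rw [sup_comm, ← map_mkQ_eq_top, eq_top_iff, ← e.span_range_symm_single_eq_top (R := R),
    span_le]
  rintro _ ⟨i, rfl⟩
  dsimp only
  rw [← hy i]
  exact mem_map_of_mem (hyP i)

end Submodule

theorem Submodule.eq_top_of_sup_range_eq_top {R M : Type*} [CommRing R] [AddCommGroup M]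
    [Module R M] [Module.Finite R M] {I : Ideal R} (hI : I ≤ Ideal.jacobson ⊥)
    {T : Module.End R M} {k : ℕ} (hT : LinearMap.range (T ^ k) ≤ I • ⊤) {N : Submodule R M}
    (hNT : N.map T ≤ N) (hN : N ⊔ LinearMap.range T = ⊤) : N = ⊤ := by
  have hpow : ∀ j, N ⊔ LinearMap.range (T ^ j) = ⊤ := by
    intro j
    induction j with
    | zero => simp [Module.End.one_eq_id, LinearMap.range_id]
    | succ j ih =>
      refine eq_top_iff.mpr ?_
      calc ⊤ = N ⊔ (⊤ : Submodule R M).map T := by rw [← LinearMap.range_eq_map, hN]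
        _ = N ⊔ (N.map T ⊔ (LinearMap.range (T ^ j)).map T) := by rw [← map_sup, ih]
        _ ≤ N ⊔ LinearMap.range (T ^ (j + 1)) := by
          rw [pow_succ', Module.End.mul_eq_comp, LinearMap.range_comp, ← sup_assoc,
            sup_eq_left.mpr hNT]
  exact top_le_iff.mp <| le_of_le_smul_of_le_jacobson_bot Module.Finite.fg_top hI <|
    (hpow k).ge.trans (sup_le_sup_left hT N)

namespace Module.End

variable {R M : Type*} [Ring R] [AddCommGroup M] [Module R M] {f : Module.End R M} {n : ℕ}

theorem injective_sub_one_of_pow_eq_one [IsAddTorsionFree M] (hn : n ≠ 0) (hf : f ^ n = 1)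
    (hcok : ∀ x : M, n • x ∈ LinearMap.range (f - 1)) : Function.Injective ⇑(f - 1) := by
  rw [← LinearMap.ker_eq_bot, eq_bot_iff]
  intro x hx
  have hfx : f x = x := sub_eq_zero.mp hx
  obtain ⟨z, hz⟩ := hcok x
  have hnorm : (∑ i ∈ range n, f ^ i) ((f - 1) z) = 0 := by
    rw [← mul_apply, geom_sum_mul, hf, sub_self, LinearMap.zero_apply]
  have hfix : (∑ i ∈ range n, f ^ i) x = n • x := by
    simp [LinearMap.sum_apply, pow_apply, Function.iterate_fixed hfx]
  rw [hz, map_nsmul, hfix, smul_smul] at hnorm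
  exact (smul_eq_zero.mp hnorm).resolve_left (mul_ne_zero hn hn)

theorem geom_sum_eq_zero_of_injective_sub_one (hf : f ^ n = 1)
    (hinj : Function.Injective ⇑(f - 1)) : ∑ i ∈ range n, f ^ i = 0 := by
  ext x
  apply hinj
  rw [← mul_apply, mul_geom_sum, hf, sub_self, LinearMap.zero_apply, map_zero]

theorem pow_apply_mem_span_pow_apply {ι : Type*} (hf : ∑ i ∈ range (n + 1), f ^ i = 0)
    (y : ι → M) (m : ℕ) (i : ι) :
    (f ^ m) (y i) ∈ span R (Set.range fun ji : Fin n × ι => (f ^ (ji.1 : ℕ)) (y ji.2)) := by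
  induction m using Nat.strong_induction_on with
  | _ m ih =>
    obtain hm | hm := lt_or_ge m n
    · exact subset_span ⟨(⟨m, hm⟩, i), rfl⟩
    have hfn : f ^ n = -∑ j ∈ range n, f ^ j := eq_neg_of_add_eq_zero_right <| by
      rwa [← sum_range_succ]
    obtain ⟨k, rfl⟩ := Nat.exists_eq_add_of_le' hm
    rw [pow_add, mul_apply, hfn, LinearMap.neg_apply, map_neg, LinearMap.sum_apply, map_sum]
    refine neg_mem (sum_mem fun j hj => ?_)
    rw [← mul_apply, ← pow_add]
    exact ih _ (by simp at hj; omega)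

theorem map_span_range_pow_apply_le {ι : Type*} (hf : ∑ i ∈ range (n + 1), f ^ i = 0)
    (y : ι → M) :
    (span R (Set.range fun ji : Fin n × ι => (f ^ (ji.1 : ℕ)) (y ji.2))).map f ≤
      span R (Set.range fun ji : Fin n × ι => (f ^ (ji.1 : ℕ)) (y ji.2)) := by
  rw [map_span_le]
  rintro _ ⟨⟨j, i⟩, rfl⟩
  rw [← mul_apply, ← pow_succ']
  exact pow_apply_mem_span_pow_apply hf y _ i

end Module.End

theorem Module.End.range_sub_one_pow_le_span_smul_top {R M : Type*} [CommRing R]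
    [AddCommGroup M] [Module R M] {f : Module.End R M} {p : ℕ} (hp : p.Prime)
    (hf : ∑ i ∈ range p, f ^ i = 0) :
    LinearMap.range ((f - 1) ^ (p - 1)) ≤ Ideal.span {(p : R)} • ⊤ := by
  obtain ⟨b, hb⟩ := exists_geom_sum_one_add_eq hp (f - 1)
  rw [add_sub_cancel, hf] at hb
  rintro _ ⟨x, rfl⟩
  rw [eq_neg_of_add_eq_zero_left hb.symm, LinearMap.neg_apply, Module.End.mul_apply,
    Module.End.natCast_apply, ← smul_neg, ← Nat.cast_smul_eq_nsmul R]
  exact smul_mem_smul (Ideal.mem_span_singleton_self _) mem_top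

open Module.End in
theorem stmt1_general (p : ℕ) [Fact p.Prime] (Y : Type*) [AddCommGroup Y] [Module ℤ_[p] Y]
    [Module.Free ℤ_[p] Y] [Module.Finite ℤ_[p] Y]
    (σ : Module.End ℤ_[p] Y) (hord : σ ^ p = 1)
    (r : ℕ)
    (hquot : Nonempty ((Y ⧸ LinearMap.range (σ - 1)) ≃+ (Fin r → ZMod p))) :
    ∃ f : (Fin ((p - 1) * r) → ℤ_[p]) →ₗ[ℤ_[p]] Y, Function.Surjective f := by
  obtain ⟨e⟩ := hquot
  have hp : p.Prime := Fact.out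
  have : IsAddTorsionFree Y := .of_isTorsionFree ℤ_[p] Y
  have hnorm : ∑ i ∈ range p, σ ^ i = 0 :=
    geom_sum_eq_zero_of_injective_sub_one hord <| injective_sub_one_of_pow_eq_one hp.ne_zero
      hord (nsmul_mem_of_quotient_addEquiv_zmod e)
  have hnorm' : ∑ i ∈ range (p - 1 + 1), σ ^ i = 0 := by rwa [Nat.sub_add_cancel hp.one_le]
  have hjac : Ideal.span {(p : ℤ_[p])} ≤ Ideal.jacobson ⊥ := by
    rw [IsLocalRing.jacobson_eq_maximalIdeal ⊥ bot_ne_top, ← PadicInt.maximalIdeal_eq_span_p]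
  choose y hy using fun i : Fin r =>
    (LinearMap.range (σ - 1)).mkQ_surjective (e.symm (Pi.single i 1))
  set v : Fin (p - 1) × Fin r → Y := fun ji => (σ ^ (ji.1 : ℕ)) (y ji.2)
  have hMσ : (span ℤ_[p] (Set.range v)).map σ ≤ span ℤ_[p] (Set.range v) :=
    map_span_range_pow_apply_le hnorm' y
  have hMT : (span ℤ_[p] (Set.range v)).map (σ - 1) ≤ span ℤ_[p] (Set.range v) := by
    rintro _ ⟨x, hx, rfl⟩
    exact sub_mem (hMσ (mem_map_of_mem hx)) hx
  have hMcok : span ℤ_[p] (Set.range v) ⊔ LinearMap.range (σ - 1) = ⊤ :=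
    sup_eq_top_of_mkQ_eq_symm_single e hy fun i => by
      simpa using pow_apply_mem_span_pow_apply hnorm' y 0 i
  refine ⟨Fintype.linearCombination ℤ_[p] (v ∘ finProdFinEquiv.symm), ?_⟩
  rw [← LinearMap.range_eq_top, Fintype.range_linearCombination,
    finProdFinEquiv.symm.surjective.range_comp]
  exact eq_top_of_sup_range_eq_top hjac (range_sub_one_pow_le_span_smul_top hp hnorm) hMT hMcok

/-- Let `p` be a prime, `Y` a finitely generated free `ℤ_p`-module with a `ℤ_p`-linear
automorphism `σ` satisfying `σ^p = 1`, and suppose `Y/(σ-1)Y ≅ (ℤ/pℤ)^r` as abelian groups.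
Then `Y` is a quotient of the free module `ℤ_p^((p-1)·r)`, i.e. there is a surjective
`ℤ_p`-linear map `ℤ_p^((p-1)·r) → Y`. -/
theorem stmt1 (p : ℕ) [Fact p.Prime] (Y : Type*) [AddCommGroup Y] [Module ℤ_[p] Y]
    [Module.Free ℤ_[p] Y] [Module.Finite ℤ_[p] Y]
    (σ : Module.End ℤ_[p] Y) (hbij : Function.Bijective σ) (hord : σ ^ p = 1)
    (r : ℕ)
    (hquot : Nonempty ((Y ⧸ LinearMap.range (σ - 1)) ≃+ (Fin r → ZMod p))) :
    ∃ f : (Fin ((p - 1) * r) → ℤ_[p]) →ₗ[ℤ_[p]] Y, Function.Surjective f :=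
  stmt1_general p Y σ hord r hquot
end

section
/- Let Y be a finitely generated free ℤ₂-module equipped with a ℤ₂-linear automorphism σ satisfying σ² = id, and suppose that the quotient Y/(σ−1)Y is isomorphic as an abelian group to (ℤ/2ℤ)^r for some integer r ≥ 0. Then Y is a free ℤ₂-module of rank exactly r, i.e., Y ≅ ℤ₂^r. -/
/-!
The quotient `Y/(σ-1)Y` is killed by `2`, so `2Y ⊆ (σ-1)Y`. Since `(σ+1)(σ-1) = σ² - 1 = 0`,
`σ` acts as `-1` on `(σ-1)Y`, hence on `2Y`, and as `Y` is torsion-free, `σ = -1` on all of `Y`.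
Thus `(σ-1)Y = 2Y`, and `Y/2Y ≅ 𝔽₂^(rank Y)` has `2^(rank Y)` elements, which forces `rank Y = r`.
-/

open Module
open scoped Pointwise

theorem Submodule.two_smul_mem_of_quotient_addEquiv_zmod_two {R M ι : Type*} [Ring R]
    [AddCommGroup M] [Module R M] {N : Submodule R M} (f : (M ⧸ N) ≃+ (ι → ZMod 2)) (y : M) :
    (2 : R) • y ∈ N := by
  rw [← Submodule.Quotient.mk_eq_zero, Submodule.Quotient.mk_smul, two_smul]
  apply f.injective
  ext i
  simp [CharTwo.add_self_eq_zero]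

theorem Module.End.eq_neg_one_of_sq_eq_one {R M : Type*} [Ring R] [AddCommGroup M] [Module R M]
    {σ : Module.End R M} (hσ : σ ^ 2 = 1) (h2 : IsSMulRegular M (2 : R))
    (hrange : ∀ y : M, (2 : R) • y ∈ LinearMap.range (σ - 1)) : σ = -1 := by
  have hkill : (σ + 1) * (σ - 1) = 0 := by
    rw [show (σ + 1) * (σ - 1) = σ ^ 2 - 1 by noncomm_ring, hσ, sub_self]
  ext y
  obtain ⟨x, hx⟩ := hrange y
  have hneg : σ ((2 : R) • y) = -((2 : R) • y) := by
    rw [← hx]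
    exact eq_neg_of_add_eq_zero_left (LinearMap.congr_fun hkill x)
  apply h2
  rw [map_smul] at hneg
  simpa [smul_neg] using hneg

theorem Module.End.range_neg_one_sub_one (R M : Type*) [CommRing R] [AddCommGroup M] [Module R M] :
    LinearMap.range ((-1 : Module.End R M) - 1) = (2 : R) • ⊤ := by
  ext x
  simp only [LinearMap.mem_range, Submodule.mem_smul_pointwise_iff_exists, Submodule.mem_top,
    true_and]
  refine ⟨fun ⟨y, hy⟩ => ⟨-y, ?_⟩, fun ⟨y, hy⟩ => ⟨-y, ?_⟩⟩ <;>
    simp [← hy, two_smul, sub_eq_add_neg]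

/-- `M/IM ≅ (R/I) ⊗ M` is free over `R/I` of rank `finrank R M`. -/
theorem Module.card_quotient_smul_top {R M : Type*} [CommRing R] [Nontrivial R] [AddCommGroup M]
    [Module R M] [Module.Free R M] [Module.Finite R M] (I : Ideal R) :
    Nat.card (M ⧸ I • (⊤ : Submodule R M)) = Nat.card (R ⧸ I) ^ finrank R M := by
  let b := ((Free.chooseBasis R M).baseChange (R ⧸ I)).equivFun
  rw [← Nat.card_congr (TensorProduct.quotTensorEquivQuotSMul M I).toEquiv,
    Nat.card_congr b.toEquiv, Nat.card_fun, finrank_eq_card_chooseBasisIndex,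
    Nat.card_eq_fintype_card (α := Free.ChooseBasisIndex R M)]

theorem PadicInt.card_quotient_maximalIdeal (p : ℕ) [Fact p.Prime] :
    Nat.card (ℤ_[p] ⧸ IsLocalRing.maximalIdeal ℤ_[p]) = p :=
  (Nat.card_congr PadicInt.residueField.toEquiv).trans (Nat.card_zmod p)

theorem stmt2_general (Y : Type*) [AddCommGroup Y] [Module ℤ_[2] Y]
    [Module.Free ℤ_[2] Y] [Module.Finite ℤ_[2] Y]
    (σ : Module.End ℤ_[2] Y) (hord : σ ^ 2 = 1)
    (r : ℕ)
    (hquot : Nonempty ((Y ⧸ LinearMap.range (σ - 1)) ≃+ (Fin r → ZMod 2))) :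
    Nonempty (Y ≃ₗ[ℤ_[2]] (Fin r → ℤ_[2])) := by
  obtain ⟨f⟩ := hquot
  have hσ : σ = -1 := Module.End.eq_neg_one_of_sq_eq_one hord
    (IsRegular.of_ne_zero two_ne_zero).isSMulRegular
    (Submodule.two_smul_mem_of_quotient_addEquiv_zmod_two f)
  have hcard : Nat.card (Y ⧸ LinearMap.range (σ - 1)) = 2 ^ finrank ℤ_[2] Y := by
    rw [hσ, Module.End.range_neg_one_sub_one, ← Submodule.ideal_span_singleton_smul,
      show (2 : ℤ_[2]) = ((2 : ℕ) : ℤ_[2]) by norm_num, ← PadicInt.maximalIdeal_eq_span_p,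
      Module.card_quotient_smul_top, PadicInt.card_quotient_maximalIdeal]
  have hrank : finrank ℤ_[2] Y = r := by
    apply Nat.pow_right_injective le_rfl
    change 2 ^ _ = 2 ^ r
    rw [← hcard, Nat.card_congr f.toEquiv, Nat.card_fun, Nat.card_zmod, Nat.card_fin]
  exact ⟨(finBasisOfFinrankEq ℤ_[2] Y hrank).equivFun⟩

/-- Let `Y` be a finitely generated free `ℤ₂`-module with a `ℤ₂`-linear automorphism `σ`
satisfying `σ² = 1`, and suppose `Y/(σ-1)Y ≅ (ℤ/2ℤ)^r` as abelian groups. Then `Y` is a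
free `ℤ₂`-module of rank exactly `r`, i.e. `Y ≅ ℤ₂^r`. -/
theorem stmt2 (Y : Type*) [AddCommGroup Y] [Module ℤ_[2] Y]
    [Module.Free ℤ_[2] Y] [Module.Finite ℤ_[2] Y]
    (σ : Module.End ℤ_[2] Y) (hbij : Function.Bijective σ) (hord : σ ^ 2 = 1)
    (r : ℕ)
    (hquot : Nonempty ((Y ⧸ LinearMap.range (σ - 1)) ≃+ (Fin r → ZMod 2))) :
    Nonempty (Y ≃ₗ[ℤ_[2]] (Fin r → ℤ_[2])) :=
  stmt2_general Y σ hord r hquot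
end

section
/- Let p be a prime, let Δ be a cyclic group of order p with generator δ, let R = ℤ_p[Δ] be the group algebra with maximal ideal m = (p, δ−1), and let X be a compact Hausdorff topological abelian group equipped with an R-module structure for which the scalar multiplication by ℤ_p and the action of δ are continuous. If the quotient X/mX is finite, then X is a finitely generated R-module (and hence also a finitely generated ℤ_p-module). -/
/-!
Pick a finitely generated `R`-submodule `N` with `N + mX = X`. Since `(δ - 1)^p ∈ (p)`, some
power of `m` lies in `(p)`, so iterating gives `X = N + p^k X` for every `k`. As `X` is compact,
`p^k X → 0` uniformly, so every element of `X` is a limit of elements of `N`. But `N` is finitely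
generated over the compact ring `ℤ_p` (because `R` is), hence compact and closed, so `N = X`.
-/

open Filter Topology Pointwise

namespace Submodule

theorem exists_fg_sup_eq_top_of_finite_quotient {R M : Type*} [Ring R] [AddCommGroup M]
    [Module R M] (P : Submodule R M) [Finite (M ⧸ P)] : ∃ N : Submodule R M, N.FG ∧ N ⊔ P = ⊤ := by
  refine ⟨span R (Set.range fun q : M ⧸ P => q.out), fg_span (Set.finite_range _), ?_⟩
  rw [sup_comm, ← map_mkQ_eq_top, map_span, ← Set.range_comp]
  convert span_univ (R := R) (M := M ⧸ P)
  ext q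
  simp

variable {R M : Type*} [CommSemiring R] [AddCommMonoid M] [Module R M]

theorem sup_pow_smul_eq_top {N : Submodule R M} {J : Ideal R} (h : N ⊔ J • ⊤ = ⊤) (n : ℕ) :
    N ⊔ J ^ n • ⊤ = ⊤ := by
  induction n with
  | zero => simp [Ideal.one_eq_top]
  | succ n ih =>
    refine eq_top_iff.2 ?_
    calc ⊤ = N ⊔ J • (N ⊔ J ^ n • ⊤) := by rw [ih, h]
      _ = N ⊔ (J • N ⊔ J ^ (n + 1) • ⊤) := by rw [smul_sup, ← Submodule.mul_smul, pow_succ']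
      _ ≤ N ⊔ J ^ (n + 1) • ⊤ := by
        rw [← sup_assoc]
        exact sup_le_sup_right (sup_le le_rfl smul_le_right) _

theorem exists_eq_add_pow_smul_of_sup_smul_eq_top {N : Submodule R M} {J : Ideal R} {r : R}
    {e : ℕ} (hN : N ⊔ J • ⊤ = ⊤) (hJ : J ^ e ≤ Ideal.span {r}) (k : ℕ) (x : M) :
    ∃ n ∈ N, ∃ z, x = n + r ^ k • z := by
  have hx : x ∈ N ⊔ r ^ k • ⊤ := by
    rw [← ideal_span_singleton_smul, ← Ideal.span_singleton_pow]
    refine sup_le_sup_left (smul_mono_left ?_) N (sup_pow_smul_eq_top hN (e * k) ▸ mem_top)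
    rw [pow_mul]
    exact Ideal.pow_right_mono hJ k
  obtain ⟨n, hn, _, hm, rfl⟩ := mem_sup.1 hx
  obtain ⟨z, -, rfl⟩ := (mem_smul_pointwise_iff_exists _ _ _).1 hm
  exact ⟨n, hn, z, rfl⟩

end Submodule

theorem sub_one_mem_radical_span_of_pow_eq_one {R : Type*} [CommRing R] {p : ℕ} (hp : p.Prime)
    {x : R} (hx : x ^ p = 1) : x - 1 ∈ (Ideal.span {(p : R)}).radical := by
  obtain ⟨r, hr⟩ := exists_add_pow_prime_eq hp (x - 1) 1
  rw [sub_add_cancel, hx, one_pow] at hr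
  exact ⟨p, Ideal.mem_span_singleton.2 ⟨-((x - 1) * r), by linear_combination -hr⟩⟩

theorem exists_span_pair_pow_le_span_of_pow_eq_one {R : Type*} [CommRing R] {p : ℕ}
    (hp : p.Prime) {x : R} (hx : x ^ p = 1) :
    ∃ e : ℕ, Ideal.span {(p : R), x - 1} ^ e ≤ Ideal.span {(p : R)} := by
  refine Ideal.exists_pow_le_of_le_radical_of_fg ?_ (Submodule.fg_span (Set.toFinite _))
  rw [Ideal.span_le, Set.insert_subset_iff, Set.singleton_subset_iff]
  exact ⟨Ideal.le_radical (Ideal.subset_span rfl), sub_one_mem_radical_span_of_pow_eq_one hp hx⟩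

theorem tendsto_smul_nhds_zero_prod_top {A X : Type*} [Zero A] [Zero X] [SMulWithZero A X]
    [TopologicalSpace A] [TopologicalSpace X] [CompactSpace X] [ContinuousSMul A X] :
    Tendsto (fun cx : A × X => cx.1 • cx.2) (𝓝 0 ×ˢ ⊤) (𝓝 0) :=
  (map_mono (nhds_prod_le_of_disjoint_cocompact 0 (by simp))).trans
    (continuous_smul.tendsto_nhdsSet_nhds fun _ ⟨hc, _⟩ => by simp [Set.mem_singleton_iff.1 hc])

theorem IsClosed.mem_of_forall_exists_eq_add_smul {A X : Type*} [Zero A] [AddGroup X]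
    [SMulWithZero A X] [TopologicalSpace A] [TopologicalSpace X] [CompactSpace X]
    [ContinuousSMul A X] [IsTopologicalAddGroup X] {c : ℕ → A} (hc : Tendsto c atTop (𝓝 0))
    {N : Set X} (hN : IsClosed N) {x : X} (h : ∀ k, ∃ n ∈ N, ∃ z, x = n + c k • z) : x ∈ N := by
  choose n hn z hz using h
  have hsmul : Tendsto (fun k => c k • z k) atTop (𝓝 0) :=
    tendsto_smul_nhds_zero_prod_top.comp (hc.prodMk tendsto_top)
  have hlim : Tendsto n atTop (𝓝 x) := by
    convert (tendsto_const_nhds (x := x)).sub hsmul using 2 with k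
    · exact eq_sub_of_add_eq (hz k).symm
    · rw [sub_zero]
  exact hN.mem_of_tendsto hlim (Eventually.of_forall hn)

theorem stmt6_general (p : ℕ) [Fact p.Prime] (Δ : Type*) [CommGroup Δ] [Fintype Δ]
    (hcard : Fintype.card Δ = p) (δ : Δ)
    (X : Type*) [AddCommGroup X] [TopologicalSpace X] [CompactSpace X] [T2Space X]
    [IsTopologicalAddGroup X]
    [Module (MonoidAlgebra ℤ_[p] Δ) X] [Module ℤ_[p] X]
    [IsScalarTower ℤ_[p] (MonoidAlgebra ℤ_[p] Δ) X]
    (hcont₁ : Continuous fun cx : ℤ_[p] × X => cx.1 • cx.2)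
    (hfin : Finite (X ⧸ (Ideal.span {(p : MonoidAlgebra ℤ_[p] Δ),
        MonoidAlgebra.of ℤ_[p] Δ δ - 1} • (⊤ : Submodule (MonoidAlgebra ℤ_[p] Δ) X)))) :
    Module.Finite (MonoidAlgebra ℤ_[p] Δ) X ∧ Module.Finite ℤ_[p] X := by
  let R := MonoidAlgebra ℤ_[p] Δ
  set J : Ideal R := Ideal.span {(p : R), MonoidAlgebra.of ℤ_[p] Δ δ - 1}
  have : ContinuousSMul ℤ_[p] X := ⟨hcont₁⟩
  obtain ⟨N, hNfg, hN⟩ := Submodule.exists_fg_sup_eq_top_of_finite_quotient (J • ⊤ : Submodule R X)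
  have hδ : MonoidAlgebra.of ℤ_[p] Δ δ ^ p = 1 := by
    have hδp : δ ^ p = 1 := hcard ▸ pow_card_eq_one
    rw [← map_pow, hδp, map_one]
  obtain ⟨e, he⟩ := exists_span_pair_pow_le_span_of_pow_eq_one (Fact.out : p.Prime) hδ
  have hNclosed : IsClosed (N : Set X) :=
    (Submodule.isCompact_of_fg (hNfg.restrictScalars (R := ℤ_[p]))).isClosed
  have hp_pow : Tendsto (fun k : ℕ => (p : ℤ_[p]) ^ k) atTop (𝓝 0) :=
    tendsto_pow_atTop_nhds_zero_of_norm_lt_one ((PadicInt.norm_lt_one_iff_dvd _).2 dvd_rfl)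
  have hNtop : N = ⊤ := by
    refine eq_top_iff.2 fun x _ => hNclosed.mem_of_forall_exists_eq_add_smul hp_pow fun k => ?_
    obtain ⟨n, hn, z, hz⟩ := Submodule.exists_eq_add_pow_smul_of_sup_smul_eq_top hN he k x
    refine ⟨n, hn, z, ?_⟩
    rwa [← map_natCast (algebraMap ℤ_[p] R), ← map_pow, algebraMap_smul] at hz
  have : Module.Finite R X := ⟨hNtop ▸ hNfg⟩
  exact ⟨this, .trans R X⟩

/-- Let `p` be a prime, `Δ` a cyclic group of order `p` with generator `δ`,
`R = ℤ_p[Δ]` the group algebra with maximal ideal `m = (p, δ-1)`, and `X` a compact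
Hausdorff topological abelian group with a continuous `R`-module structure (scalar
multiplication by `ℤ_p` and the action of `δ` are continuous). If `X/mX` is finite,
then `X` is a finitely generated `R`-module, hence a finitely generated `ℤ_p`-module. -/
theorem stmt6 (p : ℕ) [Fact p.Prime] (Δ : Type*) [CommGroup Δ] [Fintype Δ]
    (hcard : Fintype.card Δ = p) (δ : Δ) (hgen : ∀ g : Δ, g ∈ Subgroup.zpowers δ)
    (X : Type*) [AddCommGroup X] [TopologicalSpace X] [CompactSpace X] [T2Space X]
    [IsTopologicalAddGroup X]
    [Module (MonoidAlgebra ℤ_[p] Δ) X] [Module ℤ_[p] X]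
    [IsScalarTower ℤ_[p] (MonoidAlgebra ℤ_[p] Δ) X]
    (hcont₁ : Continuous fun cx : ℤ_[p] × X => cx.1 • cx.2)
    (hcont₂ : Continuous fun x : X => (MonoidAlgebra.of ℤ_[p] Δ δ) • x)
    (hfin : Finite (X ⧸ (Ideal.span {(p : MonoidAlgebra ℤ_[p] Δ),
        MonoidAlgebra.of ℤ_[p] Δ δ - 1} • (⊤ : Submodule (MonoidAlgebra ℤ_[p] Δ) X)))) :
    Module.Finite (MonoidAlgebra ℤ_[p] Δ) X ∧ Module.Finite ℤ_[p] X :=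
  stmt6_general p Δ hcard δ X hcont₁ hfin
end
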